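/- Fix f ∈ H. (1) If ∫_ℝ x^{−2} dσ_{f−f*}(x) = A < ∞, then ‖P_{t,s}f − f*‖² ≤ 4A (t−s)^{−2} for all t > s. (2) Conversely, if ‖P_{t,s}f − f*‖² ≤ B (t−s)^{−2} for all t > s, then ∫_ℝ x^{−2} dσ_{f−f*}(x) ≤ 8B. (The measure σ_{f−f*} has no atom at 0, so the integrand x^{−2} is understood on ℝ∖{0}.) -/

import Mathlib

/-!
Both parts compare the kernel with `x⁻²`. Since `sin² ≤ 1`, `F_τ(x) ≤ 4 τ⁻² x⁻²`, and integrating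
against `μ` gives (1). For (2), `τ² F_τ(x) = 2 (1 - cos τx) / x²`, whose mean over `τ ∈ (0, n]` is
`2 (1 - sin(nx)/(nx)) / x² → 2 x⁻²`. The hypothesis bounds the `μ`-integral of every `τ² F_τ` by `B`,
hence, by Tonelli, that of every such mean, and Fatou's lemma gives `2 ∫ x⁻² dμ ≤ B`.
-/

open MeasureTheory Real Set intervalIntegral

/-- The Fejér-type kernel `F_τ(x) = (sin(τx/2)/(τx/2))²`. -/
noncomputable def Fker (τ x : ℝ) : ℝ := (Real.sin (τ * x / 2) / (τ * x / 2)) ^ 2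

open Filter ENNReal Topology

lemma Real.rpow_neg_two_eq_inv_sq (x : ℝ) : x ^ (-2 : ℝ) = (x ^ 2)⁻¹ := by
  rw [rpow_neg_ofNat, zpow_neg, zpow_ofNat]

lemma Fker_nonneg (τ x : ℝ) : 0 ≤ Fker τ x := sq_nonneg _

lemma Fker_le_one (τ x : ℝ) : Fker τ x ≤ 1 := by
  rw [Fker, sq_le_one_iff_abs_le_one, abs_div]
  exact div_le_one_of_le₀ abs_sin_le_abs (abs_nonneg _)

-- Also at `τ * x = 0`, where both sides vanish since `0 / 0 = 0` and `0 ^ (-2 : ℝ) = 0`.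
lemma Fker_le (τ x : ℝ) : Fker τ x ≤ 4 * τ ^ (-2 : ℝ) * x ^ (-2 : ℝ) := by
  rw [Fker, div_pow, rpow_neg_two_eq_inv_sq, rpow_neg_two_eq_inv_sq]
  calc sin (τ * x / 2) ^ 2 / (τ * x / 2) ^ 2 ≤ 1 / (τ * x / 2) ^ 2 := by
        gcongr
        exact sin_sq_le_one _
    _ = 4 * (τ ^ 2)⁻¹ * (x ^ 2)⁻¹ := by
        field_simp
        ring

lemma sq_mul_Fker (τ x : ℝ) : τ ^ 2 * Fker τ x = 2 * (1 - cos (τ * x)) / x ^ 2 := by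
  rcases eq_or_ne τ 0 with rfl | hτ
  · simp
  rcases eq_or_ne x 0 with rfl | hx
  · simp [Fker]
  rw [Fker, div_pow, sin_sq_eq_half_sub, show 2 * (τ * x / 2) = τ * x by ring]
  field_simp

lemma measurable_Fker (τ : ℝ) : Measurable (Fker τ) := by
  unfold Fker
  fun_prop

lemma integrable_Fker (μ : Measure ℝ) [IsFiniteMeasure μ] (τ : ℝ) :
    Integrable (Fker τ) μ :=
  (integrable_const (1 : ℝ)).mono' (measurable_Fker τ).aestronglyMeasurable
    (ae_of_all _ fun x => by
      rw [Real.norm_eq_abs, abs_of_nonneg (Fker_nonneg τ x)]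
      exact Fker_le_one τ x)

theorem integral_Fker_le {μ : Measure ℝ} [IsFiniteMeasure μ]
    (hL : ∫⁻ x, ENNReal.ofReal (x ^ (-2 : ℝ)) ∂μ ≠ ⊤) (τ : ℝ) :
    ∫ x, Fker τ x ∂μ ≤ 4 * (∫⁻ x, ENNReal.ofReal (x ^ (-2 : ℝ)) ∂μ).toReal * τ ^ (-2 : ℝ) := by
  have hc : 0 ≤ 4 * τ ^ (-2 : ℝ) := by rw [rpow_neg_two_eq_inv_sq]; positivity
  have h : ∫⁻ x, ENNReal.ofReal (Fker τ x) ∂μ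
      ≤ ENNReal.ofReal (4 * τ ^ (-2 : ℝ)) * ∫⁻ x, ENNReal.ofReal (x ^ (-2 : ℝ)) ∂μ := by
    rw [← lintegral_const_mul' _ _ ofReal_ne_top]
    refine lintegral_mono fun x => ?_
    rw [← ofReal_mul hc]
    exact ofReal_le_ofReal (Fker_le τ x)
  rw [integral_eq_lintegral_of_nonneg_ae (ae_of_all _ (Fker_nonneg τ))
    (measurable_Fker τ).aestronglyMeasurable]
  calc (∫⁻ x, ENNReal.ofReal (Fker τ x) ∂μ).toReal
      ≤ (ENNReal.ofReal (4 * τ ^ (-2 : ℝ)) * ∫⁻ x, ENNReal.ofReal (x ^ (-2 : ℝ)) ∂μ).toReal :=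
        toReal_mono (mul_ne_top ofReal_ne_top hL) h
    _ = _ := by
        rw [toReal_mul, toReal_ofReal hc]
        ring

lemma integral_one_sub_cos_mul {x : ℝ} (hx : x ≠ 0) (n : ℝ) :
    ∫ τ in (0 : ℝ)..n, 2 * (1 - cos (τ * x)) / x ^ 2 = 2 / x ^ 2 * (n - sin (n * x) / x) := by
  rw [intervalIntegral.integral_div, intervalIntegral.integral_const_mul,
    intervalIntegral.integral_sub intervalIntegrable_const
      (by apply Continuous.intervalIntegrable; fun_prop),
    intervalIntegral.integral_comp_mul_right cos hx, integral_cos]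
  simp only [intervalIntegral.integral_const, sub_zero, smul_eq_mul, mul_one, zero_mul, sin_zero]
  field_simp

lemma tendsto_average_one_sub_cos_mul (x : ℝ) :
    Tendsto (fun n : ℕ => (n : ℝ)⁻¹ * ∫ τ in (0 : ℝ)..n, 2 * (1 - cos (τ * x)) / x ^ 2) atTop
      (𝓝 (2 * x ^ (-2 : ℝ))) := by
  rcases eq_or_ne x 0 with rfl | hx
  · simp
  have hsin : Tendsto (fun n : ℕ => (n : ℝ)⁻¹ * sin (n * x)) atTop (𝓝 0) :=
    (tendsto_inv_atTop_zero.comp tendsto_natCast_atTop_atTop).zero_mul_isBoundedUnder_le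
      (isBoundedUnder_of ⟨1, fun n => by simpa using abs_sin_le_one _⟩)
  have hlim := (tendsto_const_nhds (x := 2 / x ^ 2)).sub (hsin.const_mul (2 / x ^ 3))
  rw [mul_zero, sub_zero] at hlim
  rw [rpow_neg_two_eq_inv_sq, ← div_eq_mul_inv]
  refine hlim.congr' ((eventually_ne_atTop 0).mono fun n hn => ?_)
  dsimp only
  rw [integral_one_sub_cos_mul hx]
  field_simp

lemma lintegral_one_sub_cos_mul_le {μ : Measure ℝ} [IsFiniteMeasure μ] {B τ : ℝ} (hτ : τ ≠ 0)
    (h : ∫ x, Fker τ x ∂μ ≤ B * τ ^ (-2 : ℝ)) :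
    ∫⁻ x, ENNReal.ofReal (2 * (1 - cos (τ * x)) / x ^ 2) ∂μ ≤ ENNReal.ofReal B := by
  simp_rw [← sq_mul_Fker]
  rw [← ofReal_integral_eq_lintegral_ofReal ((integrable_Fker μ τ).const_mul _)
    (ae_of_all _ fun x => mul_nonneg (sq_nonneg τ) (Fker_nonneg τ x)),
    MeasureTheory.integral_const_mul]
  refine ofReal_le_ofReal ?_
  calc τ ^ 2 * ∫ x, Fker τ x ∂μ ≤ τ ^ 2 * (B * τ ^ (-2 : ℝ)) := by gcongr
    _ = B := by
        rw [rpow_neg_two_eq_inv_sq]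
        field_simp

theorem two_mul_lintegral_rpow_neg_two_le {μ : Measure ℝ} [IsFiniteMeasure μ] {B : ℝ}
    (h : ∀ τ > 0, ∫ x, Fker τ x ∂μ ≤ B * τ ^ (-2 : ℝ)) :
    2 * ∫⁻ x, ENNReal.ofReal (x ^ (-2 : ℝ)) ∂μ ≤ ENNReal.ofReal B := by
  set ψ : ℕ → ℝ → ℝ≥0∞ := fun n x => ENNReal.ofReal (n : ℝ)⁻¹ *
    ∫⁻ τ in Ioc 0 (n : ℝ), ENNReal.ofReal (2 * (1 - cos (τ * x)) / x ^ 2) with hψ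
  have hψ_meas (n : ℕ) : Measurable (ψ n) :=
    (Measurable.lintegral_prod_left (by fun_prop)).const_mul _
  have hψ_le (n : ℕ) : ∫⁻ x, ψ n x ∂μ ≤ ENNReal.ofReal B := by
    simp only [hψ]
    rw [lintegral_const_mul' _ _ ofReal_ne_top, lintegral_lintegral_swap (by fun_prop)]
    calc ENNReal.ofReal (n : ℝ)⁻¹ * ∫⁻ τ in Ioc 0 (n : ℝ),
          ∫⁻ x, ENNReal.ofReal (2 * (1 - cos (τ * x)) / x ^ 2) ∂μ
        ≤ ENNReal.ofReal (n : ℝ)⁻¹ * ∫⁻ _ in Ioc 0 (n : ℝ), ENNReal.ofReal B := by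
          gcongr _ * ?_
          exact setLIntegral_mono measurable_const fun τ (hτ : τ ∈ Ioc 0 (n : ℝ)) =>
            lintegral_one_sub_cos_mul_le hτ.1.ne' (h τ hτ.1)
      _ = ENNReal.ofReal ((n : ℝ)⁻¹ * n) * ENNReal.ofReal B := by
          rw [setLIntegral_const, Real.volume_Ioc, sub_zero, ofReal_mul (by positivity)]
          ring
      _ ≤ ENNReal.ofReal B := by
          refine mul_le_of_le_one_left zero_le (ofReal_le_one.mpr ?_)
          exact inv_mul_le_one_of_le₀ le_rfl n.cast_nonneg
  have hψ_lim (x : ℝ) :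
      Tendsto (fun n => ψ n x) atTop (𝓝 (ENNReal.ofReal (2 * x ^ (-2 : ℝ)))) := by
    have hψ_eq (n : ℕ) : ψ n x = ENNReal.ofReal
        ((n : ℝ)⁻¹ * ∫ τ in (0 : ℝ)..n, 2 * (1 - cos (τ * x)) / x ^ 2) := by
      rw [ofReal_mul (by positivity), integral_of_le n.cast_nonneg,
        ofReal_integral_eq_lintegral_ofReal (Continuous.integrableOn_Ioc (by fun_prop))
          (ae_of_all _ fun τ => ?_)]
      have := cos_le_one (τ * x)
      simp only [Pi.zero_apply]
      positivity
    simp_rw [hψ_eq]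
    exact (continuous_ofReal.tendsto _).comp (tendsto_average_one_sub_cos_mul x)
  calc 2 * ∫⁻ x, ENNReal.ofReal (x ^ (-2 : ℝ)) ∂μ
      = ∫⁻ x, liminf (fun n => ψ n x) atTop ∂μ := by
        rw [← lintegral_const_mul' _ _ ofNat_ne_top]
        congr 1 with x
        rw [(hψ_lim x).liminf_eq, ofReal_mul zero_le_two, ofReal_ofNat]
    _ ≤ liminf (fun n => ∫⁻ x, ψ n x ∂μ) atTop := lintegral_liminf_le hψ_meas
    _ ≤ ENNReal.ofReal B := liminf_le_of_frequently_le' (Frequently.of_forall hψ_le)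

theorem stmt18_general
    {H : Type*} [NormedAddCommGroup H] [InnerProductSpace ℂ H]
    (U : ℝ → H →L[ℂ] H)
    (f fstar : H)
    (μ : Measure ℝ) [IsFiniteMeasure μ] (hμ0 : μ {0} = 0)
    (hrep : ∀ s t : ℝ, s < t →
      ‖(t - s)⁻¹ • (∫ τ in s..t, U τ f) - fstar‖ ^ 2 = ∫ x, Fker (t - s) x ∂μ)
    (B : ℝ) :
    ((∫⁻ x in ({0}ᶜ : Set ℝ), ENNReal.ofReal (x ^ (-2 : ℝ)) ∂μ ≠ ⊤) →
      ∀ s t : ℝ, s < t →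
        ‖(t - s)⁻¹ • (∫ τ in s..t, U τ f) - fstar‖ ^ 2 ≤
          4 * (∫⁻ x in ({0}ᶜ : Set ℝ), ENNReal.ofReal (x ^ (-2 : ℝ)) ∂μ).toReal *
            (t - s) ^ (-2 : ℝ)) ∧
    ((0 < B ∧ ∀ s t : ℝ, s < t →
        ‖(t - s)⁻¹ • (∫ τ in s..t, U τ f) - fstar‖ ^ 2 ≤ B * (t - s) ^ (-2 : ℝ)) →
      ∫⁻ x in ({0}ᶜ : Set ℝ), ENNReal.ofReal (x ^ (-2 : ℝ)) ∂μ ≤ ENNReal.ofReal (8 * B)) := by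
  have hμ : μ.restrict ({0} : Set ℝ)ᶜ = μ :=
    Measure.restrict_eq_self_of_ae_mem (compl_mem_ae_iff.mpr hμ0)
  rw [hμ]
  refine ⟨fun hL s t hst => hrep s t hst ▸ integral_Fker_le hL (t - s), fun ⟨hB, hbound⟩ => ?_⟩
  have h : ∀ τ > 0, ∫ x, Fker τ x ∂μ ≤ B * τ ^ (-2 : ℝ) := fun τ hτ => by
    simpa only [sub_zero] using (hrep 0 τ hτ).symm.trans_le (hbound 0 τ hτ)
  calc ∫⁻ x, ENNReal.ofReal (x ^ (-2 : ℝ)) ∂μ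
      ≤ 2 * ∫⁻ x, ENNReal.ofReal (x ^ (-2 : ℝ)) ∂μ := le_mul_of_one_le_left zero_le one_le_two
    _ ≤ ENNReal.ofReal B := two_mul_lintegral_rpow_neg_two_le h
    _ ≤ ENNReal.ofReal (8 * B) := ofReal_le_ofReal (by linarith)

theorem stmt18
    {H : Type*} [NormedAddCommGroup H] [InnerProductSpace ℂ H] [CompleteSpace H]
    (U : ℝ → H →L[ℂ] H)
    (hUgrp : ∀ a b : ℝ, U (a + b) = (U a).comp (U b))
    (hUiso : ∀ (τ : ℝ) (g : H), ‖U τ g‖ = ‖g‖)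
    (f fstar : H)
    (hcont : Continuous fun τ : ℝ => U τ f)
    (hfix : ∀ τ : ℝ, U τ fstar = fstar)
    (horth : ∀ g : H, (∀ τ : ℝ, U τ g = g) → (inner ℂ (f - fstar) g : ℂ) = 0)
    (μ : Measure ℝ) [IsFiniteMeasure μ] (hμ0 : μ {0} = 0)
    (hrep : ∀ s t : ℝ, s < t →
      ‖(t - s)⁻¹ • (∫ τ in s..t, U τ f) - fstar‖ ^ 2 = ∫ x, Fker (t - s) x ∂μ)
    -- the total mass of the spectral measure of f - f* is ‖f - f*‖²
    (hμtot : μ Set.univ = ENNReal.ofReal (‖f - fstar‖ ^ 2))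
    (B : ℝ) :
    ((∫⁻ x in ({0}ᶜ : Set ℝ), ENNReal.ofReal (x ^ (-2 : ℝ)) ∂μ ≠ ⊤) →
      ∀ s t : ℝ, s < t →
        ‖(t - s)⁻¹ • (∫ τ in s..t, U τ f) - fstar‖ ^ 2 ≤
          4 * (∫⁻ x in ({0}ᶜ : Set ℝ), ENNReal.ofReal (x ^ (-2 : ℝ)) ∂μ).toReal *
            (t - s) ^ (-2 : ℝ)) ∧
    ((0 < B ∧ ∀ s t : ℝ, s < t →
        ‖(t - s)⁻¹ • (∫ τ in s..t, U τ f) - fstar‖ ^ 2 ≤ B * (t - s) ^ (-2 : ℝ)) →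
      ∫⁻ x in ({0}ᶜ : Set ℝ), ENNReal.ofReal (x ^ (-2 : ℝ)) ∂μ ≤ ENNReal.ofReal (8 * B)) :=
  stmt18_general U f fstar μ hμ0 hrep B
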